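/- Let A and B be flat layouts. Then Φ_A = Φ_B (meaning size(A) = size(B) and Φ_A(x) = Φ_B(x) for all x ∈ {0,…,size(A)−1}) if and only if coal(A) = coal(B). -/

import Mathlib

/-- A flat layout, represented as its list of modes `(sᵢ, dᵢ)`:
the first component of each mode is a shape entry, the second a stride entry. -/
abbrev FlatLayout := List (ℕ × ℕ)

namespace FlatLayout

/-- Validity of a flat layout: every shape entry is a positive integer. -/
def Valid (L : FlatLayout) : Prop := ∀ p ∈ L, 0 < p.1

/-- The size of a flat layout: the product of its shape entries. -/
def size (L : FlatLayout) : ℕ := (L.map Prod.fst).prod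

/-- The cosize of a flat layout: `1 + Σ (sᵢ - 1) * dᵢ`. -/
def cosize (L : FlatLayout) : ℕ := 1 + (L.map fun p => (p.1 - 1) * p.2).sum

/-- The rank of a flat layout: its number of modes. -/
def rank (L : FlatLayout) : ℕ := L.length

/-- The layout function `Φ_L`: `Φ_L(x) = Σ xᵢ·dᵢ` where
`xᵢ = ⌊x / (s₁⋯sᵢ₋₁)⌋ mod sᵢ`. -/
def phi : FlatLayout → ℕ → ℕ
  | [], _ => 0
  | (s, d) :: rest, x => x % s * d + phi rest (x / s)

/-- `squeeze L` deletes every mode whose shape entry equals `1`. -/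
def squeeze (L : FlatLayout) : FlatLayout := L.filter fun p => p.1 != 1

/-- `filterZeros L` deletes every mode whose stride entry equals `0`. -/
def filterZeros (L : FlatLayout) : FlatLayout := L.filter fun p => p.2 != 0

/-- The ordering on modes: `(s,d) ⪯ (s',d')` iff `d < d'`, or `d = d'` and `s ≤ s'`. -/
def ModeLE (p q : ℕ × ℕ) : Prop := p.2 < q.2 ∨ (p.2 = q.2 ∧ p.1 ≤ q.1)

instance : DecidableRel ModeLE := fun p q => by unfold ModeLE; infer_instance

/-- A flat layout is sorted if its consecutive modes are `⪯`-increasing. -/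
def Sorted (L : FlatLayout) : Prop := L.Chain' ModeLE

/-- `sortL L` stably sorts the modes of `L` with respect to `⪯`. -/
def sortL (L : FlatLayout) : FlatLayout := L.mergeSort fun p q => decide (ModeLE p q)

/-- A flat layout is coalesced if no shape entry equals `1` and
for consecutive modes, `sᵢ·dᵢ ≠ dᵢ₊₁`. -/
def Coalesced (L : FlatLayout) : Prop :=
  (∀ p ∈ L, p.1 ≠ 1) ∧ L.Chain' fun p q => p.1 * p.2 ≠ q.2

/-- Combine adjacent modes `(s,d), (s',d')` with `d' = s·d` into `(s·s', d)`, repeatedly. -/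
def coalAux : List (ℕ × ℕ) → List (ℕ × ℕ)
  | [] => []
  | p :: rest =>
    match coalAux rest with
    | [] => [p]
    | q :: rest' =>
        if p.1 * p.2 = q.2 then (p.1 * q.1, p.2) :: rest' else p :: q :: rest'

/-- Coalesce of a flat layout: squeeze, then repeatedly combine adjacent modes
`(s,d), (s',d')` with `d' = s·d` into `(s·s', d)`. -/
def coal (L : FlatLayout) : FlatLayout := coalAux (squeeze L)

/-- Compactness: the layout function takes values in `{0, …, cosize L - 1}` and induces a
bijection `{0, …, size L - 1} → {0, …, cosize L - 1}`. -/
def Compact (L : FlatLayout) : Prop :=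
  Set.BijOn (phi L) {x | x < size L} {y | y < cosize L}

/-- `B` is a complement of `A` (written `A ⊥ B`) if the concatenation `A ⋆ B` is compact. -/
def Perp (A B : FlatLayout) : Prop := Compact (A ++ B)

/-- `A` is complementable if, writing `sort(squeeze A) = (s₁,…,sₘ):(d₁,…,dₘ)`,
`sᵢ·dᵢ` divides `dᵢ₊₁` for all `1 ≤ i < m`. -/
def Complementable (A : FlatLayout) : Prop :=
  (sortL (squeeze A)).Chain' fun p q => p.1 * p.2 ∣ q.2

/-- `B` is an `N`-complement of `A` if `B` is a complement of `A`
and `size A * size B = N`. -/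
def IsNComplement (A B : FlatLayout) (N : ℕ) : Prop :=
  Perp A B ∧ size A * size B = N

/-- `A` is `N`-complementable if, writing `sort(squeeze A) = (s₁,…,sₘ):(d₁,…,dₘ)`,
`sᵢ·dᵢ ∣ dᵢ₊₁` for all `1 ≤ i < m`, and `sₘ·dₘ ∣ N`. -/
def NComplementable (A : FlatLayout) (N : ℕ) : Prop :=
  ((sortL (squeeze A)).Chain' fun p q => p.1 * p.2 ∣ q.2) ∧
  ∀ p, (sortL (squeeze A)).getLast? = some p → p.1 * p.2 ∣ N

/-- Given `l = [(s₁,d₁),…,(sₘ,dₘ)]`, the layout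
`C = (d₁, d₂/(s₁d₁), …, dₘ/(sₘ₋₁dₘ₋₁)) : (1, s₁d₁, …, sₘ₋₁dₘ₋₁)`. -/
def compModes (l : List (ℕ × ℕ)) : List (ℕ × ℕ) :=
  match l with
  | [] => []
  | (_, d₁) :: t =>
      (d₁, 1) :: (l.zip t).map fun pq => (pq.2.2 / (pq.1.1 * pq.1.2), pq.1.1 * pq.1.2)

/-- The complement `comp A = coal C` of a complementable flat layout `A`. -/
def comp (A : FlatLayout) : FlatLayout := coal (compModes (sortL (squeeze A)))

/-- Given `l = [(s₁,d₁),…,(sₘ,dₘ)]` and `N`, the layout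
`C = (d₁, d₂/(s₁d₁), …, dₘ/(sₘ₋₁dₘ₋₁), N/(sₘdₘ)) : (1, s₁d₁, …, sₘ₋₁dₘ₋₁, sₘdₘ)`. -/
def compNModes (l : List (ℕ × ℕ)) (N : ℕ) : List (ℕ × ℕ) :=
  match l.getLast? with
  | none => [(N, 1)]
  | some (sm, dm) => compModes l ++ [(N / (sm * dm), sm * dm)]

/-- The `N`-complement `comp(A, N) = coal C` of an `N`-complementable flat layout `A`. -/
def compN (A : FlatLayout) (N : ℕ) : FlatLayout :=
  coal (compNModes (sortL (squeeze A)) N)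

/-- `L` is tractable if, writing `sort L = (s₁,…,sₘ):(d₁,…,dₘ)`, for every `1 ≤ i < m`
either `dᵢ = 0` or `sᵢ·dᵢ` divides `dᵢ₊₁`. -/
def Tractable (L : FlatLayout) : Prop :=
  (sortL L).Chain' fun p q => p.2 = 0 ∨ p.1 * p.2 ∣ q.2

end FlatLayout


namespace FlatLayout

@[simp] lemma size_nil : size [] = 1 := rfl

@[simp] lemma size_cons (s d : ℕ) (L : FlatLayout) : size ((s, d) :: L) = s * size L := by
  simp [size]

lemma phi_cons (s d : ℕ) (L : FlatLayout) (x : ℕ) :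
    phi ((s, d) :: L) x = x % s * d + phi L (x / s) := rfl

@[simp] lemma phi_zero (L : FlatLayout) : phi L 0 = 0 := by
  induction L with
  | nil => rfl
  | cons p L ih =>
    obtain ⟨s, d⟩ := p
    simp [phi_cons, ih]

lemma phi_cons_of_lt {s x : ℕ} (d : ℕ) (L : FlatLayout) (hx : x < s) :
    phi ((s, d) :: L) x = x * d := by
  simp [phi_cons, Nat.mod_eq_of_lt hx, Nat.div_eq_of_lt hx]

lemma phi_cons_mul {s : ℕ} (d : ℕ) (L : FlatLayout) (x : ℕ) (hs : 0 < s) :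
    phi ((s, d) :: L) (s * x) = phi L x := by
  simp [phi_cons, hs]

lemma size_pos {L : FlatLayout} (hL : Valid L) : 0 < size L :=
  List.prod_pos fun _ h => by
    obtain ⟨p, hp, rfl⟩ := List.mem_map.mp h
    exact hL p hp

lemma Valid.of_cons {p : ℕ × ℕ} {L : FlatLayout} (h : Valid (p :: L)) : Valid L :=
  fun q hq => h q (List.mem_cons_of_mem p hq)

lemma Coalesced.of_cons {p : ℕ × ℕ} {L : FlatLayout} (h : Coalesced (p :: L)) : Coalesced L :=
  ⟨fun q hq => h.1 q (List.mem_cons_of_mem p hq), List.IsChain.tail h.2⟩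

lemma two_le_of_mem {L : FlatLayout} (hL : Valid L) (hLc : Coalesced L) {p : ℕ × ℕ}
    (hp : p ∈ L) : 2 ≤ p.1 := by
  have := hL p hp
  have := hLc.1 p hp
  omega

lemma le_size_cons {s : ℕ} (d : ℕ) {L : FlatLayout} (hL : Valid L) :
    s ≤ size ((s, d) :: L) := by
  rw [size_cons]
  exact Nat.le_mul_of_pos_right s (size_pos hL)

lemma size_squeeze (L : FlatLayout) : size (squeeze L) = size L := by
  induction L with
  | nil => rfl
  | cons p L ih =>
    obtain ⟨s, d⟩ := p
    by_cases h : s = 1 <;> simp_all [squeeze]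

lemma phi_squeeze (L : FlatLayout) : phi (squeeze L) = phi L := by
  induction L with
  | nil => rfl
  | cons p L ih =>
    obtain ⟨s, d⟩ := p
    funext x
    by_cases h : s = 1 <;> simp_all [squeeze, phi_cons, Nat.mod_one]

lemma size_merge (s u d : ℕ) (L : FlatLayout) :
    size ((s * u, d) :: L) = size ((s, d) :: (u, s * d) :: L) := by
  simp [mul_assoc]

lemma phi_merge (s u d : ℕ) (L : FlatLayout) :
    phi ((s * u, d) :: L) = phi ((s, d) :: (u, s * d) :: L) := by
  funext x
  simp only [phi_cons, Nat.mod_mul, Nat.div_div_eq_div_mul]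
  ring

lemma size_coalAux_cons (p : ℕ × ℕ) (L : FlatLayout) :
    size (coalAux (p :: L)) = size (p :: coalAux L) := by
  obtain ⟨s, d⟩ := p
  rw [coalAux]
  split
  next h => rw [h]
  next q rest h =>
    obtain ⟨u, f⟩ := q
    split_ifs with hm
    · simp only at hm ⊢
      rw [h, ← hm, size_merge]
    · rw [h]

lemma phi_coalAux_cons (p : ℕ × ℕ) (L : FlatLayout) :
    phi (coalAux (p :: L)) = phi (p :: coalAux L) := by
  obtain ⟨s, d⟩ := p
  rw [coalAux]
  split
  next h => rw [h]
  next q rest h =>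
    obtain ⟨u, f⟩ := q
    split_ifs with hm
    · simp only at hm ⊢
      rw [h, ← hm, phi_merge]
    · rw [h]

lemma size_coalAux (L : FlatLayout) : size (coalAux L) = size L := by
  induction L with
  | nil => rfl
  | cons p L ih =>
    obtain ⟨s, d⟩ := p
    rw [size_coalAux_cons, size_cons, size_cons, ih]

lemma phi_coalAux (L : FlatLayout) : phi (coalAux L) = phi L := by
  induction L with
  | nil => rfl
  | cons p L ih =>
    obtain ⟨s, d⟩ := p
    funext x
    rw [phi_coalAux_cons, phi_cons, phi_cons, ih]

lemma size_coal (L : FlatLayout) : size (coal L) = size L := by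
  rw [coal, size_coalAux, size_squeeze]

lemma phi_coal (L : FlatLayout) : phi (coal L) = phi L := by
  rw [coal, phi_coalAux, phi_squeeze]

lemma forall_mem_coalAux {P : ℕ × ℕ → Prop}
    (hP : ∀ s d u f, P (s, d) → P (u, f) → P (s * u, d)) {L : FlatLayout}
    (hL : ∀ p ∈ L, P p) : ∀ p ∈ coalAux L, P p := by
  induction L with
  | nil => simp [coalAux]
  | cons p L ih =>
    have ih := ih fun q hq => hL q (List.mem_cons_of_mem p hq)
    have hp := hL p List.mem_cons_self
    rw [coalAux]
    split
    next => simpa using hp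
    next q rest h =>
      rw [h] at ih
      split_ifs
      · simp only [List.forall_mem_cons] at ih ⊢
        exact ⟨hP _ _ _ _ hp ih.1, ih.2⟩
      · exact List.forall_mem_cons.mpr ⟨hp, ih⟩

lemma isChain_coalAux (L : FlatLayout) :
    (coalAux L).IsChain fun p q => p.1 * p.2 ≠ q.2 := by
  induction L with
  | nil => exact List.isChain_nil
  | cons p L ih =>
    rw [coalAux]
    split
    next => exact List.isChain_singleton p
    next q rest h =>
      rw [h] at ih
      split_ifs with hm
      · cases rest with
        | nil => exact List.isChain_singleton _
        | cons r rest =>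
          obtain ⟨hqr, hr⟩ := List.isChain_cons_cons.mp ih
          refine List.isChain_cons_cons.mpr ⟨fun h' => hqr ?_, hr⟩
          rw [← h', ← hm]
          ring
      · exact List.isChain_cons_cons.mpr ⟨hm, ih⟩

lemma coalesced_coal (L : FlatLayout) : Coalesced (coal L) := by
  refine ⟨forall_mem_coalAux (P := fun p => p.1 ≠ 1) ?_ ?_, isChain_coalAux _⟩
  · intro s d u f hs _ hsu
    exact hs (Nat.eq_one_of_mul_eq_one_right hsu)
  · intro p hp
    simpa [squeeze] using (List.mem_filter.mp hp).2

lemma valid_coal {L : FlatLayout} (hL : Valid L) : Valid (coal L) :=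
  forall_mem_coalAux (fun _ _ _ _ => Nat.mul_pos)
    fun p hp => hL p (List.mem_filter.mp hp).1

section Uniqueness

variable {L M : FlatLayout}

lemma eq_nil_of_size_eq_one (hL : Valid L) (hLc : Coalesced L) (h : size L = 1) : L = [] := by
  obtain _ | ⟨⟨s, d⟩, L⟩ := L
  · rfl
  · have := two_le_of_mem hL hLc List.mem_cons_self
    have := le_size_cons d hL.of_cons (s := s)
    omega

/-- If `t < s`, the first layout sends `t` to `t·d` while the second sends `t` to the stride of
its second mode, which coalescedness makes different from `t·d`. -/
lemma le_of_phi_eq_cons {s t d : ℕ} (hL : Valid ((s, d) :: L)) (hM : Valid ((t, d) :: M))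
    (hMc : Coalesced ((t, d) :: M)) (hsize : size ((s, d) :: L) = size ((t, d) :: M))
    (hphi : ∀ x < size ((s, d) :: L), phi ((s, d) :: L) x = phi ((t, d) :: M) x) : s ≤ t := by
  by_contra! hts
  have ht : 0 < t := hM _ List.mem_cons_self
  have hs_le := le_size_cons d hL.of_cons (s := s)
  obtain _ | ⟨⟨t', e'⟩, M⟩ := M
  · have : s ≤ t := by simpa [hsize] using hs_le
    omega
  have ht' := two_le_of_mem hM hMc (p := (t', e')) (by simp)
  have key := hphi (t * 1) (by omega)
  rw [phi_cons_of_lt _ _ (by omega), phi_cons_mul _ _ _ ht, phi_cons_of_lt _ _ ht'] at key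
  exact (List.isChain_cons_cons.mp hMc.2).1 (by simpa using key)

theorem eq_of_phi_eq (hL : Valid L) (hM : Valid M) (hLc : Coalesced L) (hMc : Coalesced M)
    (hsize : size L = size M) (hphi : ∀ x < size L, phi L x = phi M x) : L = M := by
  induction L generalizing M with
  | nil => exact (eq_nil_of_size_eq_one hM hMc hsize.symm).symm
  | cons p L ih =>
    obtain _ | ⟨⟨t, e⟩, M⟩ := M
    · exact eq_nil_of_size_eq_one hL hLc hsize
    obtain ⟨s, d⟩ := p
    have hs := two_le_of_mem hL hLc List.mem_cons_self
    have hd : d = e := by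
      simpa [phi_cons_of_lt _ _ (show 1 < s by omega),
        phi_cons_of_lt _ _ (show 1 < t from two_le_of_mem hM hMc List.mem_cons_self)]
        using hphi 1 (by have := le_size_cons d hL.of_cons (s := s); omega)
    subst hd
    obtain rfl : s = t := le_antisymm (le_of_phi_eq_cons hL hM hMc hsize hphi)
      (le_of_phi_eq_cons hM hL hLc hsize.symm fun x hx => (hphi x (hsize ▸ hx)).symm)
    have hs0 : 0 < s := by omega
    congr 1
    refine ih hL.of_cons hM.of_cons hLc.of_cons hMc.of_cons
      (Nat.eq_of_mul_eq_mul_left hs0 (by simpa using hsize)) fun x hx => ?_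
    rw [← phi_cons_mul d L x hs0, ← phi_cons_mul d M x hs0]
    exact hphi _ (by simpa using Nat.mul_lt_mul_of_pos_left hx hs0)

end Uniqueness

end FlatLayout

open FlatLayout in
theorem phi_eq_iff_coal_eq (A B : FlatLayout) (hA : A.Valid) (hB : B.Valid) :
    (size A = size B ∧ ∀ x < size A, phi A x = phi B x) ↔ coal A = coal B := by
  rw [← size_coal A, ← size_coal B, ← phi_coal A, ← phi_coal B]
  constructor
  · rintro ⟨hsize, hphi⟩
    exact eq_of_phi_eq (valid_coal hA) (valid_coal hB) (coalesced_coal A) (coalesced_coal B)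
      hsize hphi
  · intro h
    exact ⟨congrArg size h, fun x _ => by rw [h]⟩
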